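/- arXiv:2206.05890 — 5 statements merged into one kernel-verified Lean document; each statement's English description precedes it below -/
import Mathlib

section
/- Let q be a real number with q > 0 and q ≠ 1, let k ≥ 1 and x ≥ 1 be natural numbers, and let r_1, …, r_k ≥ 1 be natural numbers. Then the q-multinomial coefficient satisfies the recurrence C_q(x; r_1,…,r_k) = C_q(x−1; r_1,…,r_k) + Σ_{j=1}^{k} q^{x−m_j} · C_q(x−1; r_1,…,r_{j−1}, r_j−1, r_{j+1},…,r_k), where m_j = r_j + r_{j+1} + ⋯ + r_k. -/
/-!
With `s = ∑ r_j`, every term of the recurrence is a multiple of `[x-1]_{s-1,q} / ∏ [r_j]_q!`: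
the left side is `[x]_q` times it, `C_q(x-1; r)` is `[x-s]_q` times it, and the `j`-th summand
is `q^(x-m_j) [r_j]_q` times it. The recurrence thus reduces to
`[x]_q = [x-s]_q + ∑_j q^(x-m_j) [r_j]_q`, which telescopes by `[a+b]_q = [a]_q + q^a [b]_q`
because `x - m_j + r_j = x - m_{j+1}`.
-/

noncomputable def qNum (q : ℝ) (m : ℤ) : ℝ := (1 - q ^ m) / (1 - q)

noncomputable def qFactorial (q : ℝ) (n : ℕ) : ℝ :=
  ∏ i ∈ Finset.range n, qNum q ((i : ℤ) + 1)

noncomputable def qFacOrd (q : ℝ) (x : ℤ) (r : ℕ) : ℝ :=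
  ∏ i ∈ Finset.range r, qNum q (x - (i : ℤ))

noncomputable def qMultinomial (q : ℝ) (x : ℤ) {k : ℕ} (r : Fin k → ℕ) : ℝ :=
  qFacOrd q x (∑ j, r j) / ∏ j, qFactorial q (r j)

variable {q : ℝ}

lemma qNum_ne_zero (hq : 0 < q) (hq1 : q ≠ 1) {m : ℤ} (hm : m ≠ 0) : qNum q m ≠ 0 := by
  have hpow : q ^ m ≠ 1 := fun h => hm (zpow_right_injective₀ hq hq1 (by simpa using h))
  exact div_ne_zero (sub_ne_zero.2 hpow.symm) (sub_ne_zero.2 hq1.symm)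

lemma qNum_add (hq : q ≠ 0) (a b : ℤ) : qNum q (a + b) = qNum q a + q ^ a * qNum q b := by
  simp only [qNum, zpow_add₀ hq]
  ring

lemma qNum_eq_sub_sum_add_sum (hq : q ≠ 0) (x : ℤ) {k : ℕ} (r : Fin k → ℤ) :
    qNum q x = qNum q (x - ∑ j, r j) + ∑ j, q ^ (x - ∑ i ≥ j, r i) * qNum q (r j) := by
  induction k generalizing x with
  | zero => simp
  | succ k ih =>
    have hsplit : qNum q (x - ∑ i : Fin k, r i.succ) =
        qNum q (x - ∑ j, r j) + q ^ (x - ∑ j, r j) * qNum q (r 0) := by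
      rw [← qNum_add hq, Fin.sum_univ_succ r]
      congr 1
      ring
    rw [Fin.sum_univ_succ (f := fun j => q ^ _ * _)]
    have hIci : ∑ i ≥ (0 : Fin (k + 1)), r i = ∑ i, r i := by simp
    simp only [Fin.sum_Ici_succ, hIci]
    linear_combination ih x (fun i => r i.succ) + hsplit

lemma qFactorial_succ (n : ℕ) : qFactorial q (n + 1) = qFactorial q n * qNum q (n + 1) :=
  Finset.prod_range_succ _ n

lemma qFacOrd_succ (x : ℤ) (n : ℕ) : qFacOrd q x (n + 1) = qFacOrd q x n * qNum q (x - n) :=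
  Finset.prod_range_succ _ n

lemma qFacOrd_succ' (x : ℤ) (n : ℕ) : qFacOrd q x (n + 1) = qNum q x * qFacOrd q (x - 1) n := by
  rw [qFacOrd, Finset.prod_range_succ', Nat.cast_zero, sub_zero, mul_comm, qFacOrd]
  congr 1
  refine Finset.prod_congr rfl fun i _ => ?_
  congr 1
  push_cast
  ring

lemma qFacOrd_succ_eq_sub_one_add (x : ℤ) (n : ℕ) :
    qFacOrd q x (n + 1) =
      qFacOrd q (x - 1) (n + 1) + (qNum q x - qNum q (x - 1 - n)) * qFacOrd q (x - 1) n := by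
  rw [qFacOrd_succ', qFacOrd_succ]
  ring

lemma qMultinomial_update_pred (hq : 0 < q) (hq1 : q ≠ 1) (y : ℤ) {k : ℕ} {r : Fin k → ℕ}
    {j : Fin k} (hj : 1 ≤ r j) :
    qMultinomial q y (Function.update r j (r j - 1)) =
      qFacOrd q y (∑ i, r i - 1) * qNum q (r j) / ∏ i, qFactorial q (r i) := by
  have hsum : ∑ i, Function.update r j (r j - 1) i = ∑ i, r i - 1 := by
    rw [Finset.sum_update_of_mem (Finset.mem_univ j),
      Finset.sum_eq_add_sum_sdiff_singleton_of_mem (Finset.mem_univ j)]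
    omega
  have hprod : ∏ i, qFactorial q (r i) =
      (∏ i, qFactorial q (Function.update r j (r j - 1) i)) * qNum q (r j) := by
    have hrest : ∏ i ∈ Finset.univ \ {j}, qFactorial q (Function.update r j (r j - 1) i) =
        ∏ i ∈ Finset.univ \ {j}, qFactorial q (r i) :=
      Finset.prod_congr rfl fun i hi => by rw [Function.update_of_ne (by simpa using hi)]
    obtain ⟨n, hn⟩ := Nat.exists_eq_add_of_le' hj
    rw [Finset.prod_eq_mul_prod_sdiff_singleton_of_mem (Finset.mem_univ j),
      Finset.prod_eq_mul_prod_sdiff_singleton_of_mem (Finset.mem_univ j), Function.update_self,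
      hrest, hn, qFactorial_succ]
    push_cast
    ring
  unfold qMultinomial
  rw [hsum, hprod, mul_div_mul_right _ _ (qNum_ne_zero hq hq1 (by omega))]

theorem qMultinomial_recurrence_general (q : ℝ) (hq : 0 < q) (hq1 : q ≠ 1)
    (k x : ℕ) (r : Fin k → ℕ) (hr : ∀ j, 1 ≤ r j) :
    qMultinomial q (x : ℤ) r =
      qMultinomial q ((x : ℤ) - 1) r +
      ∑ j : Fin k,
        q ^ ((x : ℤ) - ∑ i ∈ Finset.univ.filter (fun i => j ≤ i), (r i : ℤ)) *
          qMultinomial q ((x : ℤ) - 1) (Function.update r j (r j - 1)) := by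
  obtain rfl | hk := Nat.eq_zero_or_pos k
  · simp [qMultinomial, qFacOrd]
  obtain ⟨n, hn⟩ : ∃ n, ∑ i, r i = n + 1 :=
    Nat.exists_eq_add_of_le' ((hr ⟨0, hk⟩).trans (Finset.single_le_sum (by simp) (by simp)))
  have hsum : ∑ j, (r j : ℤ) = n + 1 := by exact_mod_cast hn
  simp only [Finset.filter_le_eq_Ici, qMultinomial_update_pred hq hq1 _ (hr _), hn,
    Nat.add_sub_cancel]
  unfold qMultinomial
  rw [hn, qFacOrd_succ_eq_sub_one_add,
    qNum_eq_sub_sum_add_sum hq.ne' x fun j => (r j : ℤ), hsum,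
    show (x : ℤ) - (n + 1) = x - 1 - n by ring, add_sub_cancel_left, add_div]
  congr 1
  rw [Finset.sum_mul, Finset.sum_div]
  exact Finset.sum_congr rfl fun j _ => by ring

/-- q-multinomial recurrence: C_q(x; r) = C_q(x−1; r) + Σ_j q^(x−m_j) C_q(x−1; r with r_j−1),
    m_j = r_j + ⋯ + r_k. -/
theorem qMultinomial_recurrence (q : ℝ) (hq : 0 < q) (hq1 : q ≠ 1)
    (k x : ℕ) (hk : 1 ≤ k) (hx : 1 ≤ x) (r : Fin k → ℕ) (hr : ∀ j, 1 ≤ r j) :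
    qMultinomial q (x : ℤ) r =
      qMultinomial q ((x : ℤ) - 1) r +
      ∑ j : Fin k,
        q ^ ((x : ℤ) - ∑ i ∈ Finset.univ.filter (fun i => j ≤ i), (r i : ℤ)) *
          qMultinomial q ((x : ℤ) - 1) (Function.update r j (r j - 1)) :=
  qMultinomial_recurrence_general q hq hq1 k x r hr
end

section
/- Let p and q be positive real numbers with p ≠ q, let k ≥ 1 and x be natural numbers, and let r_1, …, r_k be natural numbers. Then the (p,q)-multinomial coefficient with inverted parameters satisfies C_{p^{-1},q^{-1}}(x; r_1,…,r_k) = (pq)^{−Σ_{j=1}^k r_j (x − m_j)} · C_{p,q}(x; r_1,…,r_k), and moreover Σ_{j=1}^k r_j (x − m_j) = Σ_{j=1}^k r_j (x − s_j), where s_j = r_1+⋯+r_j and m_j = r_j+⋯+r_k. -/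
noncomputable def pqNum (p q : ℝ) (m : ℤ) : ℝ := (p ^ m - q ^ m) / (p - q)

noncomputable def pqFactorial (p q : ℝ) (n : ℕ) : ℝ :=
  ∏ i ∈ Finset.range n, pqNum p q ((i : ℤ) + 1)

noncomputable def pqFacOrd (p q : ℝ) (x : ℤ) (r : ℕ) : ℝ :=
  ∏ i ∈ Finset.range r, pqNum p q (x - (i : ℤ))

noncomputable def pqMultinomial (p q : ℝ) (x : ℤ) {k : ℕ} (r : Fin k → ℕ) : ℝ :=
  pqFacOrd p q x (∑ j, r j) / ∏ j, pqFactorial p q (r j)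

noncomputable def pqBinomial (p q : ℝ) (x : ℤ) (r : ℕ) : ℝ :=
  pqFacOrd p q x r / pqFactorial p q r

/-!
Inverting both parameters turns `[m]_{p,q}` into `(pq)^(1-m) [m]_{p,q}`, so the falling factorial
`[x]_{S}` and each `[r_j]!` acquire a power of `pq` whose exponent is linear in `x` plus a
triangular number. The exponents combine to the stated one via
`2 ∑_j r_j m_j = S² + ∑_j r_j² = 2 ∑_j r_j s_j` (with `S = ∑_j r_j`): summing `r_j r_i` over
`j ≤ i` or over `i ≤ j` counts every off-diagonal pair once and the diagonal once.
-/

open Finset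

theorem pqNum_inv {p q : ℝ} (hp : p ≠ 0) (hq : q ≠ 0) (m : ℤ) :
    pqNum p⁻¹ q⁻¹ m = (p * q) ^ (1 - m) * pqNum p q m := by
  rw [pqNum, pqNum, inv_zpow, inv_zpow, inv_sub_inv (zpow_ne_zero m hp) (zpow_ne_zero m hq),
    inv_sub_inv hp hq, div_div_div_eq, zpow_sub₀ (mul_ne_zero hp hq), zpow_one, mul_zpow,
    ← neg_sub p q, ← neg_sub (p ^ m), neg_mul, mul_neg, neg_div_neg_eq,
    mul_comm (p ^ m - q ^ m), mul_div_mul_comm]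

theorem Finset.prod_zpow_eq_zpow_sum₀ {ι G : Type*} [CommGroupWithZero G] (s : Finset ι)
    (f : ι → ℤ) {a : G} (ha : a ≠ 0) : ∏ i ∈ s, a ^ f i = a ^ ∑ i ∈ s, f i := by
  induction s using Finset.cons_induction with
  | empty => simp
  | cons i s _ ih => rw [prod_cons, sum_cons, ih, zpow_add₀ ha]

theorem two_mul_sum_range_id (n : ℕ) : 2 * ∑ i ∈ range n, (i : ℤ) = n * (n - 1) := by
  have h := congrArg (Nat.cast : ℕ → ℤ) (sum_range_id_mul_two n)
  rcases n with _ | n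
  · simp
  · push_cast at h ⊢
    linarith

section PowerSums

variable {ι : Type*} [Fintype ι] [LinearOrder ι]

theorem sum_mul_sum_filter_ge_eq_sum_mul_sum_filter_le {R : Type*} [CommSemiring R]
    (f : ι → R) :
    ∑ j, f j * ∑ i ∈ univ.filter (j ≤ ·), f i = ∑ j, f j * ∑ i ∈ univ.filter (· ≤ j), f i := by
  simp only [mul_sum]
  rw [sum_comm' (t' := univ) (s' := fun i => univ.filter (· ≤ i)) (by simp)]
  exact sum_congr rfl fun _ _ => sum_congr rfl fun _ _ => mul_comm _ _

theorem sum_filter_ge_add_sum_filter_le {M : Type*} [AddCommMonoid M] (f : ι → M) (j : ι) :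
    ∑ i ∈ univ.filter (j ≤ ·), f i + ∑ i ∈ univ.filter (· ≤ j), f i = ∑ i, f i + f j := by
  have hj : f j = ∑ i, if j = i then f i else 0 := by simp
  rw [hj, sum_filter, sum_filter, ← sum_add_distrib, ← sum_add_distrib]
  refine sum_congr rfl fun i _ => ?_
  rcases lt_trichotomy i j with h | rfl | h
  · simp [h.not_ge, h.le, h.ne']
  · simp
  · simp [h.le, h.not_ge, h.ne]

theorem two_mul_sum_mul_sum_filter_ge {R : Type*} [CommSemiring R] (f : ι → R) :
    2 * ∑ j, f j * ∑ i ∈ univ.filter (j ≤ ·), f i = (∑ i, f i) ^ 2 + ∑ i, f i ^ 2 := by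
  calc 2 * ∑ j, f j * ∑ i ∈ univ.filter (j ≤ ·), f i
      = ∑ j, f j * (∑ i ∈ univ.filter (j ≤ ·), f i + ∑ i ∈ univ.filter (· ≤ j), f i) := by
        rw [two_mul]
        nth_rw 2 [sum_mul_sum_filter_ge_eq_sum_mul_sum_filter_le]
        simp only [mul_add, sum_add_distrib]
    _ = (∑ i, f i) ^ 2 + ∑ i, f i ^ 2 := by
        simp only [sum_filter_ge_add_sum_filter_le, mul_add, sum_add_distrib, ← sum_mul, sq]

end PowerSums

section Inversion

variable {p q : ℝ}

theorem pqFacOrd_inv (hp : p ≠ 0) (hq : q ≠ 0) (x : ℤ) (n : ℕ) :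
    pqFacOrd p⁻¹ q⁻¹ x n =
      (p * q) ^ (n * (1 - x) + ∑ i ∈ range n, (i : ℤ)) * pqFacOrd p q x n := by
  have hexp : n * (1 - x) + ∑ i ∈ range n, (i : ℤ) = ∑ i ∈ range n, (1 - (x - i)) := by
    simp only [sub_sub_eq_add_sub, sum_sub_distrib, sum_add_distrib, sum_const, card_range]
    ring
  rw [hexp, ← prod_zpow_eq_zpow_sum₀ _ _ (mul_ne_zero hp hq), pqFacOrd, pqFacOrd,
    ← prod_mul_distrib]
  exact prod_congr rfl fun i _ => pqNum_inv hp hq _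

theorem pqFactorial_inv (hp : p ≠ 0) (hq : q ≠ 0) (n : ℕ) :
    pqFactorial p⁻¹ q⁻¹ n = (p * q) ^ (-∑ i ∈ range n, (i : ℤ)) * pqFactorial p q n := by
  rw [← sum_neg_distrib, ← prod_zpow_eq_zpow_sum₀ _ _ (mul_ne_zero hp hq), pqFactorial,
    pqFactorial, ← prod_mul_distrib]
  refine prod_congr rfl fun i _ => ?_
  rw [pqNum_inv hp hq, sub_add_cancel_right]

theorem pqMultinomial_inv_eq_zpow_mul (hp : p ≠ 0) (hq : q ≠ 0) (x : ℤ) {k : ℕ}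
    (r : Fin k → ℕ) :
    pqMultinomial p⁻¹ q⁻¹ x r =
      (p * q) ^ ((∑ j, r j : ℕ) * (1 - x) + ∑ i ∈ range (∑ j, r j), (i : ℤ) +
        ∑ j, ∑ i ∈ range (r j), (i : ℤ)) * pqMultinomial p q x r := by
  have hpq : p * q ≠ 0 := mul_ne_zero hp hq
  simp only [pqMultinomial, pqFacOrd_inv hp hq, pqFactorial_inv hp hq, prod_mul_distrib,
    prod_zpow_eq_zpow_sum₀ _ _ hpq, mul_div_mul_comm, ← zpow_sub₀ hpq, sum_neg_distrib,
    sub_neg_eq_add]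

end Inversion

theorem pqMultinomial_inv_exponent {ι : Type*} [Fintype ι] [LinearOrder ι] (x : ℤ) (r : ι → ℕ) :
    (∑ j, r j : ℕ) * (1 - x) + ∑ i ∈ range (∑ j, r j), (i : ℤ) +
        ∑ j, ∑ i ∈ range (r j), (i : ℤ) =
      -∑ j, (r j : ℤ) * (x - ∑ i ∈ univ.filter (j ≤ ·), (r i : ℤ)) := by
  have hS : ((∑ j, r j : ℕ) : ℤ) = ∑ j, (r j : ℤ) := Nat.cast_sum _ _
  have hT := two_mul_sum_range_id (∑ j, r j)
  have hU : 2 * ∑ j, ∑ i ∈ range (r j), (i : ℤ) = ∑ j, (r j : ℤ) ^ 2 - ∑ j, (r j : ℤ) := by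
    rw [mul_sum, ← sum_sub_distrib]
    exact sum_congr rfl fun j _ => by rw [two_mul_sum_range_id]; ring
  have hM := two_mul_sum_mul_sum_filter_ge (fun j => (r j : ℤ))
  have hxM : ∑ j, (r j : ℤ) * (x - ∑ i ∈ univ.filter (j ≤ ·), (r i : ℤ)) =
      (∑ j, (r j : ℤ)) * x - ∑ j, (r j : ℤ) * ∑ i ∈ univ.filter (j ≤ ·), (r i : ℤ) := by
    rw [sum_mul, ← sum_sub_distrib]
    simp only [mul_sub]
  rw [hS] at hT ⊢
  rw [hxM]
  refine mul_left_cancel₀ (two_ne_zero (α := ℤ)) ?_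
  linear_combination hT + hU - hM

theorem pqMultinomial_inv_general (p q : ℝ) (hp : 0 < p) (hq : 0 < q)
    (k x : ℕ) (r : Fin k → ℕ) :
    pqMultinomial p⁻¹ q⁻¹ (x : ℤ) r =
      (p * q) ^
          (-(∑ j : Fin k, (r j : ℤ) *
              ((x : ℤ) - ∑ i ∈ Finset.univ.filter (fun i => j ≤ i), (r i : ℤ)))) *
        pqMultinomial p q (x : ℤ) r ∧
    (∑ j : Fin k, (r j : ℤ) *
        ((x : ℤ) - ∑ i ∈ Finset.univ.filter (fun i => j ≤ i), (r i : ℤ))) =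
      ∑ j : Fin k, (r j : ℤ) *
        ((x : ℤ) - ∑ i ∈ Finset.univ.filter (fun i => i ≤ j), (r i : ℤ)) := by
  constructor
  · rw [pqMultinomial_inv_eq_zpow_mul hp.ne' hq.ne', pqMultinomial_inv_exponent]
  · simp only [mul_sub, sum_sub_distrib, sum_mul_sum_filter_ge_eq_sum_mul_sum_filter_le]

/-- Inversion formula for (p,q)-multinomial coefficients:
    C_{p⁻¹,q⁻¹}(x; r) = (pq)^(−Σ_j r_j (x − m_j)) C_{p,q}(x; r),
    and Σ_j r_j (x − m_j) = Σ_j r_j (x − s_j). -/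
theorem pqMultinomial_inv (p q : ℝ) (hp : 0 < p) (hq : 0 < q) (hpq : p ≠ q)
    (k x : ℕ) (hk : 1 ≤ k) (r : Fin k → ℕ) :
    pqMultinomial p⁻¹ q⁻¹ (x : ℤ) r =
      (p * q) ^
          (-(∑ j : Fin k, (r j : ℤ) *
              ((x : ℤ) - ∑ i ∈ Finset.univ.filter (fun i => j ≤ i), (r i : ℤ)))) *
        pqMultinomial p q (x : ℤ) r ∧
    (∑ j : Fin k, (r j : ℤ) *
        ((x : ℤ) - ∑ i ∈ Finset.univ.filter (fun i => j ≤ i), (r i : ℤ))) =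
      ∑ j : Fin k, (r j : ℤ) *
        ((x : ℤ) - ∑ i ∈ Finset.univ.filter (fun i => i ≤ j), (r i : ℤ)) :=
  pqMultinomial_inv_general p q hp hq k x r
end

section
/- Let q be a real number with 0 < q < 1, let k ≥ 1 and n ≥ 1 be natural numbers, and let θ_1, …, θ_k be real numbers with 0 < θ_j < 1 for each j. Then the negative q-multinomial distribution of the second kind with parameters n, (θ_1,…,θ_k), q is a probability distribution: the family indexed by tuples (w_1,…,w_k) ∈ ℕ^k of terms C_q(n + s_k − 1; w_1,…,w_k) · ∏_{j=1}^{k} [ θ_j^{w_j} · ∏_{i=1}^{n + s_k − s_j} (1 − θ_j q^{i−1}) ] is summable with sum equal to 1; here s_j = w_1 + ⋯ + w_j and s_k = w_1 + ⋯ + w_k. -/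
/-!
Split off the first coordinate `w₁ = a` and put `N = n + w₂ + ⋯ + w_k`. The `q`-multinomial
coefficient factors as `C_q(N + a - 1; a)` times the coefficient of `(w₂, …, w_k)`, so the term
factors as `C_q(N + a - 1; a) θ₁^a ∏_{i<N} (1 - θ₁ qⁱ)` times the term of the same distribution with
parameters `n, (θ₂, …, θ_k)`. The first factor sums to `1` over `a` by the `q`-binomial theorem
`∑ₐ C_q(N + a - 1; a) tᵃ = ∏_{i<N} (1 - t qⁱ)⁻¹`, which follows by induction on `N`: the Cauchy
product with the geometric series `∑ tᵃ` is computed by the `q`-Pascal rule. Induction on `k`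
concludes.
-/

open Finset

theorem HasSum.of_prod_fiberwise_of_nonneg {β γ : Type*} {f : β × γ → ℝ} {g : β → ℝ} {a : ℝ}
    (hf : 0 ≤ f) (hg : HasSum g a) (hfg : ∀ b, HasSum (fun c ↦ f (b, c)) (g b)) :
    HasSum f a := by
  have hsum : Summable f := (summable_prod_of_nonneg hf).2
    ⟨fun b ↦ (hfg b).summable, by simpa only [(hfg _).tsum_eq] using hg.summable⟩
  exact (hsum.hasSum.prod_fiberwise hfg).unique hg ▸ hsum.hasSum

/-- `qMultichoose q N a` is the Gaussian binomial coefficient `C_q(N + a - 1; a)`. -/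
noncomputable def qMultichoose (q : ℝ) (N a : ℕ) : ℝ :=
  ∏ i ∈ range a, (1 - q ^ (N + i)) / (1 - q ^ (i + 1))

section QMultichoose

variable {q : ℝ}

theorem qMultichoose_zero_left {a : ℕ} (ha : a ≠ 0) : qMultichoose q 0 a = 0 :=
  prod_eq_zero (mem_range.2 (Nat.pos_of_ne_zero ha)) (by simp)

theorem qMultichoose_nonneg (hq0 : 0 ≤ q) (hq1 : q ≤ 1) (N a : ℕ) : 0 ≤ qMultichoose q N a :=
  prod_nonneg fun _ _ ↦ div_nonneg (sub_nonneg.2 (pow_le_one₀ hq0 hq1))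
    (sub_nonneg.2 (pow_le_one₀ hq0 hq1))

variable (hq0 : 0 ≤ q) (hq1 : q < 1)
include hq0 hq1

theorem qMultichoose_succ_succ (N a : ℕ) :
    qMultichoose q (N + 1) (a + 1) =
      qMultichoose q (N + 1) a + q ^ (a + 1) * qMultichoose q N (a + 1) := by
  have hD : ∀ m : ℕ, (1 : ℝ) - q ^ (m + 1) ≠ 0 :=
    fun m ↦ (sub_pos.2 (pow_lt_one₀ hq0 hq1 m.succ_ne_zero)).ne'
  have hshift : ∏ i ∈ range (a + 1), (1 - q ^ (N + i)) =
      (1 - q ^ N) * ∏ i ∈ range a, (1 - q ^ (N + 1 + i)) := by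
    rw [prod_range_succ', mul_comm]
    simp only [add_zero, add_right_comm N 1, add_assoc]
  have hsplit : (1 : ℝ) - q ^ (N + 1 + a) = (1 - q ^ (a + 1)) + q ^ (a + 1) * (1 - q ^ N) := by
    rw [show N + 1 + a = (a + 1) + N by ring, pow_add]
    ring
  simp only [qMultichoose, prod_div_distrib]
  rw [prod_range_succ, prod_range_succ (fun i ↦ 1 - q ^ (i + 1)), hshift, hsplit]
  field_simp [hD a]

theorem qMultichoose_succ_left (N a : ℕ) :
    qMultichoose q (N + 1) a = ∑ j ∈ range (a + 1), q ^ j * qMultichoose q N j := by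
  induction a with
  | zero => simp [qMultichoose]
  | succ a ih => rw [sum_range_succ, ← ih, qMultichoose_succ_succ hq0 hq1]

/-- The `q`-binomial theorem. -/
theorem hasSum_qMultichoose_mul_pow (N : ℕ) {t : ℝ} (ht0 : 0 ≤ t) (ht1 : t < 1) :
    HasSum (fun a ↦ qMultichoose q N a * t ^ a) (∏ i ∈ range N, (1 - t * q ^ i))⁻¹ := by
  induction N generalizing t with
  | zero =>
    simpa [qMultichoose] using hasSum_single (f := fun a ↦ qMultichoose q 0 a * t ^ a) 0
      fun a ha ↦ by rw [qMultichoose_zero_left ha, zero_mul]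
  | succ N ih =>
    have hqt := ih (mul_nonneg hq0 ht0) (by nlinarith)
    have hgeom := hasSum_geometric_of_lt_one ht0 ht1
    have hcauchy := hasSum_sum_range_mul_of_summable_norm hqt.summable.norm hgeom.summable.norm
    rw [hqt.tsum_eq, hgeom.tsum_eq] at hcauchy
    have hcoeff : ∀ a, ∑ j ∈ range (a + 1), qMultichoose q N j * (q * t) ^ j * t ^ (a - j) =
        qMultichoose q (N + 1) a * t ^ a := by
      intro a
      rw [qMultichoose_succ_left hq0 hq1, sum_mul]
      refine sum_congr rfl fun j hj ↦ ?_
      rw [mul_pow, ← pow_sub_mul_pow t (Nat.le_of_lt_succ (mem_range.1 hj))]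
      ring
    have hprod : (∏ i ∈ range N, (1 - q * t * q ^ i))⁻¹ * (1 - t)⁻¹ =
        (∏ i ∈ range (N + 1), (1 - t * q ^ i))⁻¹ := by
      rw [prod_range_succ', mul_inv]
      simp only [pow_succ, pow_zero, mul_one]
      congr 2
      exact prod_congr rfl fun i _ ↦ by ring
    simpa only [hcoeff, hprod] using hcauchy

end QMultichoose

/-- The negative `q`-binomial distribution: the case `k = 1` of the theorem, with `N = n`. -/
noncomputable def negQBinomial (q : ℝ) (N : ℕ) (t : ℝ) (a : ℕ) : ℝ :=
  qMultichoose q N a * t ^ a * ∏ i ∈ range N, (1 - t * q ^ i)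

section NegQBinomial

variable {q t : ℝ} (hq0 : 0 ≤ q) (hq1 : q ≤ 1) (ht0 : 0 ≤ t)
include hq0 hq1 ht0

theorem negQBinomial_nonneg (ht1 : t ≤ 1) (N a : ℕ) : 0 ≤ negQBinomial q N t a :=
  mul_nonneg (mul_nonneg (qMultichoose_nonneg hq0 hq1 N a) (pow_nonneg ht0 a))
    (prod_nonneg fun _ _ ↦ sub_nonneg.2 (mul_le_one₀ ht1 (pow_nonneg hq0 _) (pow_le_one₀ hq0 hq1)))

theorem one_sub_mul_pow_pos (ht1 : t < 1) (i : ℕ) : 0 < 1 - t * q ^ i :=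
  sub_pos.2 (mul_lt_one_of_nonneg_of_lt_one_left ht0 ht1 (pow_le_one₀ hq0 hq1))

end NegQBinomial

theorem hasSum_negQBinomial {q t : ℝ} (hq0 : 0 ≤ q) (hq1 : q < 1) (ht0 : 0 ≤ t) (ht1 : t < 1)
    (N : ℕ) : HasSum (negQBinomial q N t) 1 := by
  have hpos : 0 < ∏ i ∈ range N, (1 - t * q ^ i) :=
    prod_pos fun i _ ↦ one_sub_mul_pow_pos hq0 hq1.le ht0 ht1 i
  have h := (hasSum_qMultichoose_mul_pow hq0 hq1 N ht0 ht1).mul_right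
    (∏ i ∈ range N, (1 - t * q ^ i))
  rwa [inv_mul_cancel₀ hpos.ne'] at h

section QMultinomial

variable {q : ℝ}

theorem qFacOrd_add (x : ℤ) (r s : ℕ) :
    qFacOrd q x (r + s) = qFacOrd q x r * qFacOrd q (x - r) s := by
  rw [qFacOrd, prod_range_add]
  congr 1
  exact prod_congr rfl fun i _ ↦ by push_cast; ring_nf

theorem qMultinomial_cons {k : ℕ} (x : ℤ) (a : ℕ) (v : Fin k → ℕ) :
    qMultinomial q x (Fin.cons a v : Fin (k + 1) → ℕ) =
      qFacOrd q x a / qFactorial q a * qMultinomial q (x - a) v := by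
  simp only [qMultinomial, Fin.sum_cons, Fin.prod_univ_succ, Fin.cons_zero, Fin.cons_succ,
    qFacOrd_add, div_mul_div_comm]

theorem qFacOrd_div_qFactorial (hq : q ≠ 1) (N a : ℕ) :
    qFacOrd q ((N : ℤ) + a - 1) a / qFactorial q a = qMultichoose q N a := by
  have hnum : qFacOrd q ((N : ℤ) + a - 1) a = ∏ i ∈ range a, qNum q ((N + i : ℕ) : ℤ) := by
    rw [qFacOrd, ← prod_range_reflect]
    refine prod_congr rfl fun i hi ↦ ?_
    have := mem_range.1 hi
    congr 1
    omega
  rw [hnum, qFactorial, ← prod_div_distrib]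
  refine prod_congr rfl fun i _ ↦ ?_
  rw [qNum, qNum, ← Nat.cast_succ, zpow_natCast, zpow_natCast,
    div_div_div_cancel_right₀ (sub_ne_zero.2 hq.symm)]

end QMultinomial

noncomputable def negQMultinomialSecondKind (q : ℝ) (n : ℕ) {k : ℕ} (θ : Fin k → ℝ)
    (w : Fin k → ℕ) : ℝ :=
  qMultinomial q ((n : ℤ) + (∑ i, w i) - 1) w *
    ∏ j : Fin k,
      θ j ^ w j *
        ∏ i ∈ range (n + (∑ i', w i') - ∑ i' ∈ univ.filter (fun i' => i' ≤ j), w i'),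
          (1 - θ j * q ^ i)

section NegQMultinomialSecondKind

variable {q : ℝ}

theorem negQMultinomialSecondKind_fin_zero (n : ℕ) (θ : Fin 0 → ℝ) (w : Fin 0 → ℕ) :
    negQMultinomialSecondKind q n θ w = 1 := by
  simp [negQMultinomialSecondKind, qMultinomial, qFacOrd]

theorem negQMultinomialSecondKind_cons (hq : q ≠ 1) (n : ℕ) {k : ℕ} (θ : Fin (k + 1) → ℝ)
    (a : ℕ) (v : Fin k → ℕ) :
    negQMultinomialSecondKind q n θ (Fin.cons a v) =
      negQBinomial q (n + ∑ i, v i) (θ 0) a * negQMultinomialSecondKind q n (Fin.tail θ) v := by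
  have hcoeff : qMultinomial q ((n : ℤ) + ((a + ∑ i, v i : ℕ) : ℤ) - 1) (Fin.cons a v) =
      qMultichoose q (n + ∑ i, v i) a * qMultinomial q ((n : ℤ) + ((∑ i, v i : ℕ) : ℤ) - 1) v := by
    have hx : (n : ℤ) + ((a + ∑ i, v i : ℕ) : ℤ) - 1 = ((n + ∑ i, v i : ℕ) : ℤ) + a - 1 := by
      push_cast; ring
    rw [qMultinomial_cons, hx, qFacOrd_div_qFactorial hq]
    congr 2
    push_cast; ring
  have hpartial (j : Fin k) :
      ∑ i' ∈ univ.filter (fun i' ↦ i' ≤ j.succ), (Fin.cons a v : Fin (k + 1) → ℕ) i' =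
        a + ∑ i' ∈ univ.filter (fun i' ↦ i' ≤ j), v i' := by
    simp only [sum_filter, Fin.sum_univ_succ, Fin.cons_zero, Fin.cons_succ, Fin.succ_le_succ_iff,
      Fin.zero_le, if_true]
  have hpartial_zero :
      ∑ i' ∈ univ.filter (fun i' : Fin (k + 1) ↦ i' ≤ 0), (Fin.cons a v : Fin (k + 1) → ℕ) i' =
        a := by
    simp [filter_eq']
  unfold negQMultinomialSecondKind negQBinomial
  rw [Fin.sum_cons, hcoeff, Fin.prod_univ_succ]
  simp only [Fin.cons_zero, Fin.cons_succ, hpartial, hpartial_zero, Fin.tail,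
    show n + (a + ∑ i, v i) - a = n + ∑ i, v i by omega,
    show ∀ S, n + (a + ∑ i, v i) - (a + S) = n + ∑ i, v i - S by omega]
  ring

variable (hq0 : 0 ≤ q) (hq1 : q < 1) (n : ℕ)
include hq0 hq1

theorem negQMultinomialSecondKind_nonneg {k : ℕ} (θ : Fin k → ℝ) (hθ0 : ∀ j, 0 ≤ θ j)
    (hθ1 : ∀ j, θ j ≤ 1) (w : Fin k → ℕ) : 0 ≤ negQMultinomialSecondKind q n θ w := by
  induction k with
  | zero => rw [negQMultinomialSecondKind_fin_zero]; exact zero_le_one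
  | succ k ih =>
    induction w using Fin.consCases with
    | cons a v =>
      rw [negQMultinomialSecondKind_cons hq1.ne]
      exact mul_nonneg (negQBinomial_nonneg hq0 hq1.le (hθ0 0) (hθ1 0) _ a)
        (ih _ (fun _ ↦ hθ0 _) (fun _ ↦ hθ1 _) v)

theorem hasSum_negQMultinomialSecondKind {k : ℕ} (θ : Fin k → ℝ) (hθ0 : ∀ j, 0 ≤ θ j)
    (hθ1 : ∀ j, θ j < 1) : HasSum (negQMultinomialSecondKind q n θ) 1 := by
  induction k with
  | zero =>
    simpa only [negQMultinomialSecondKind_fin_zero] using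
      hasSum_unique (negQMultinomialSecondKind q n θ)
  | succ k ih =>
    let e : (Fin k → ℕ) × ℕ ≃ (Fin (k + 1) → ℕ) :=
      (Equiv.prodComm _ _).trans (Fin.consEquiv fun _ ↦ ℕ)
    rw [← e.hasSum_iff]
    refine .of_prod_fiberwise_of_nonneg
      (fun _ ↦ negQMultinomialSecondKind_nonneg hq0 hq1 n θ hθ0 (fun j ↦ (hθ1 j).le) _)
      (ih (Fin.tail θ) (fun _ ↦ hθ0 _) (fun _ ↦ hθ1 _)) fun v ↦ ?_
    show HasSum (fun a ↦ negQMultinomialSecondKind q n θ (Fin.cons a v)) _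
    simpa only [negQMultinomialSecondKind_cons hq1.ne, one_mul] using
      (hasSum_negQBinomial hq0 hq1 (hθ0 0) (hθ1 0) _).mul_right
        (negQMultinomialSecondKind q n (Fin.tail θ) v)

end NegQMultinomialSecondKind

theorem neg_qMultinomial_dist_second_kind_general (q : ℝ) (hq0 : 0 < q) (hq1 : q < 1)
    (k n : ℕ) (θ : Fin k → ℝ)
    (hθ0 : ∀ j, 0 < θ j) (hθ1 : ∀ j, θ j < 1) :
    HasSum
      (fun w : Fin k → ℕ =>
        qMultinomial q ((n : ℤ) + (∑ i, w i) - 1) w *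
          ∏ j : Fin k,
            θ j ^ w j *
              ∏ i ∈ Finset.range
                  (n + (∑ i', w i') - ∑ i' ∈ Finset.univ.filter (fun i' => i' ≤ j), w i'),
                (1 - θ j * q ^ i))
      1 :=
  hasSum_negQMultinomialSecondKind hq0.le hq1 n θ (fun j ↦ (hθ0 j).le) hθ1

/-- The negative q-multinomial distribution of the second kind is a probability distribution:
    the family over (w_1,…,w_k) ∈ ℕ^k of terms
    C_q(n+s_k−1; w) ∏_j θ_j^(w_j) ∏_{i=1}^{n+s_k−s_j} (1 − θ_j q^(i−1)) sums to 1. -/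
theorem neg_qMultinomial_dist_second_kind (q : ℝ) (hq0 : 0 < q) (hq1 : q < 1)
    (k n : ℕ) (hk : 1 ≤ k) (hn : 1 ≤ n) (θ : Fin k → ℝ)
    (hθ0 : ∀ j, 0 < θ j) (hθ1 : ∀ j, θ j < 1) :
    HasSum
      (fun w : Fin k → ℕ =>
        qMultinomial q ((n : ℤ) + (∑ i, w i) - 1) w *
          ∏ j : Fin k,
            θ j ^ w j *
              ∏ i ∈ Finset.range
                  (n + (∑ i', w i') - ∑ i' ∈ Finset.univ.filter (fun i' => i' ≤ j), w i'),
                (1 - θ j * q ^ i))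
      1 :=
  neg_qMultinomial_dist_second_kind_general q hq0 hq1 k n θ hθ0 hθ1
end

section
/- Let q be a real number with 0 < q < 1, let k ≥ 1 be a natural number, let θ_1, …, θ_k be positive real numbers, and let (y_1,…,y_k) be a fixed tuple of natural numbers with s_j = y_1 + ⋯ + y_j (s_0 = 0). Then the probability mass of the q-multinomial distribution of the first kind converges, as n → ∞, to that of the multiple q-Heine distribution: lim_{n → ∞} C_q(n; y_1,…,y_k) · ∏_{j=1}^{k} [ θ_j^{y_j} · q^{y_j(y_j−1)/2} / ∏_{i=1}^{n − s_{j−1}} (1 + θ_j q^{i−1}) ] = ∏_{j=1}^{k} [ θ_j^{y_j} · q^{y_j(y_j−1)/2} / ( (1−q)^{y_j} · [y_j]_q! · ∏_{i=0}^{∞} (1 + θ_j q^{i}) ) ], where ∏_{i=0}^{∞} (1 + θ_j q^i) denotes the convergent infinite product. -/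
open Filter Finset Topology

section QAnalogues

variable {q : ℝ}

lemma tendsto_qNum_natCast_sub_atTop (hq : |q| < 1) (i : ℕ) :
    Tendsto (fun n : ℕ => qNum q ((n : ℤ) - i)) atTop (𝓝 (1 - q)⁻¹) := by
  have hpow : Tendsto (fun n : ℕ => q ^ ((n : ℤ) - i)) atTop (𝓝 0) := by
    refine ((tendsto_pow_atTop_nhds_zero_of_abs_lt_one hq).comp
      (tendsto_sub_atTop_nat i)).congr' ?_
    filter_upwards [eventually_ge_atTop i] with n hn
    rw [Function.comp_apply, ← zpow_natCast, Nat.cast_sub hn]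
  simpa [qNum, div_eq_mul_inv] using (hpow.const_sub 1).div_const (1 - q)

lemma tendsto_qFacOrd_natCast_atTop (hq : |q| < 1) (r : ℕ) :
    Tendsto (fun n : ℕ => qFacOrd q n r) atTop (𝓝 ((1 - q)⁻¹ ^ r)) := by
  simpa [qFacOrd] using
    tendsto_finsetProd (range r) fun i _ => tendsto_qNum_natCast_sub_atTop hq i

lemma tendsto_qMultinomial_natCast_atTop (hq : |q| < 1) {k : ℕ} (y : Fin k → ℕ) :
    Tendsto (fun n : ℕ => qMultinomial q n y) atTop
      (𝓝 (∏ j, ((1 - q) ^ y j * qFactorial q (y j))⁻¹)) := by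
  have hlim : ∏ j, ((1 - q) ^ y j * qFactorial q (y j))⁻¹
      = (1 - q)⁻¹ ^ (∑ j, y j) / ∏ j, qFactorial q (y j) := by
    rw [← prod_pow_eq_pow_sum, div_eq_mul_inv, ← prod_inv_distrib, ← prod_mul_distrib]
    exact prod_congr rfl fun j _ => by rw [mul_inv, inv_pow]
  rw [hlim]
  exact (tendsto_qFacOrd_natCast_atTop hq _).div_const _

lemma multipliable_one_add_mul_pow (hq : |q| < 1) (θ : ℝ) :
    Multipliable fun i : ℕ => 1 + θ * q ^ i :=
  Real.multipliable_one_add_of_summable ((summable_geometric_of_abs_lt_one hq).mul_left θ)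

lemma tendsto_prod_range_sub_one_add_mul_pow (hq : |q| < 1) (θ : ℝ) (s : ℕ) :
    Tendsto (fun n => ∏ i ∈ range (n - s), (1 + θ * q ^ i)) atTop
      (𝓝 (∏' i, (1 + θ * q ^ i))) :=
  (multipliable_one_add_mul_pow hq θ).hasProd.tendsto_prod_nat.comp (tendsto_sub_atTop_nat s)

lemma one_le_tprod_one_add_mul_pow (hq : |q| < 1) (hq0 : 0 ≤ q) {θ : ℝ} (hθ : 0 ≤ θ) :
    1 ≤ ∏' i : ℕ, (1 + θ * q ^ i) :=
  ge_of_tendsto' (multipliable_one_add_mul_pow hq θ).hasProd.tendsto_prod_nat fun _ =>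
    one_le_prod fun i _ => le_add_of_nonneg_right (by positivity)

end QAnalogues

theorem qMultinomial_first_kind_tendsto_heine_general (q : ℝ) (hq0 : 0 < q) (hq1 : q < 1)
    (k : ℕ) (θ : Fin k → ℝ) (hθ : ∀ j, 0 < θ j) (y : Fin k → ℕ) :
    Filter.Tendsto
      (fun n : ℕ =>
        qMultinomial q (n : ℤ) y *
          ∏ j : Fin k,
            θ j ^ y j * q ^ (y j * (y j - 1) / 2) /
              ∏ i ∈ Finset.range
                  (n - ∑ i' ∈ Finset.univ.filter (fun i' => i' < j), y i'),
                (1 + θ j * q ^ i))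
      Filter.atTop
      (nhds (∏ j : Fin k,
        θ j ^ y j * q ^ (y j * (y j - 1) / 2) /
          ((1 - q) ^ y j * qFactorial q (y j) * ∏' i : ℕ, (1 + θ j * q ^ i)))) := by
  have hq : |q| < 1 := abs_lt.2 ⟨by linarith, hq1⟩
  refine ((tendsto_qMultinomial_natCast_atTop hq y).mul (tendsto_finsetProd univ fun j _ =>
    tendsto_const_nhds.div (tendsto_prod_range_sub_one_add_mul_pow hq (θ j) _)
      (zero_lt_one.trans_le (one_le_tprod_one_add_mul_pow hq hq0.le (hθ j).le)).ne')).mono_right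
    (congrArg 𝓝 ?_).le
  rw [← prod_mul_distrib]
  exact prod_congr rfl fun j _ => by ring

/-- The pmf of the q-multinomial distribution of the first kind converges, as n → ∞,
    to that of the multiple q-Heine distribution. -/
theorem qMultinomial_first_kind_tendsto_heine (q : ℝ) (hq0 : 0 < q) (hq1 : q < 1)
    (k : ℕ) (hk : 1 ≤ k) (θ : Fin k → ℝ) (hθ : ∀ j, 0 < θ j) (y : Fin k → ℕ) :
    Filter.Tendsto
      (fun n : ℕ =>
        qMultinomial q (n : ℤ) y *
          ∏ j : Fin k,
            θ j ^ y j * q ^ (y j * (y j - 1) / 2) /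
              ∏ i ∈ Finset.range
                  (n - ∑ i' ∈ Finset.univ.filter (fun i' => i' < j), y i'),
                (1 + θ j * q ^ i))
      Filter.atTop
      (nhds (∏ j : Fin k,
        θ j ^ y j * q ^ (y j * (y j - 1) / 2) /
          ((1 - q) ^ y j * qFactorial q (y j) * ∏' i : ℕ, (1 + θ j * q ^ i)))) :=
  qMultinomial_first_kind_tendsto_heine_general q hq0 hq1 k θ hθ y
end

section
/- Let q be a real number with 0 < q < 1, let k ≥ 1 be a natural number, let θ_1, …, θ_k be real numbers with 0 < θ_j < 1, and let (x_1,…,x_k) be a fixed tuple of natural numbers with s_j = x_1 + ⋯ + x_j. Then the probability mass of the q-multinomial distribution of the second kind converges, as n → ∞, to that of the multiple q-Euler distribution: lim_{n → ∞} C_q(n; x_1,…,x_k) · ∏_{j=1}^{k} [ θ_j^{x_j} · ∏_{i=1}^{n − s_j} (1 − θ_j q^{i−1}) ] = ∏_{j=1}^{k} [ θ_j^{x_j} · ∏_{i=0}^{∞} (1 − θ_j q^{i}) / ( (1−q)^{x_j} · [x_j]_q! ) ], where ∏_{i=0}^{∞} (1 − θ_j q^i) denotes the convergent infinite product. -/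
open Filter Topology Finset

/-! For `|q| < 1` we have `q ^ n → 0`, so every factor `[n - i]_q` of the q-factorial of
order `∑ x_j` tends to `1 / (1 - q)`, while each truncated product
`∏_{i < n - s_j} (1 - θ_j q^i)` is a shifted partial product of an infinite product that
converges because `∑ |θ_j q^i| < ∞`. The limit is then a finite product of limits. -/

section Limits

variable {q : ℝ}

lemma tendsto_qNum_natCast_sub (hq0 : q ≠ 0) (hq : |q| < 1) (i : ℤ) :
    Tendsto (fun n : ℕ => qNum q (n - i)) atTop (𝓝 (1 - q)⁻¹) := by
  have hpow : Tendsto (fun n : ℕ => q ^ n / q ^ i) atTop (𝓝 (0 / q ^ i)) :=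
    (tendsto_pow_atTop_nhds_zero_of_abs_lt_one hq).div_const _
  have hlim := (hpow.const_sub 1).div_const (1 - q)
  simp only [zero_div, sub_zero, one_div] at hlim
  refine hlim.congr fun n => ?_
  rw [qNum, zpow_sub₀ hq0, zpow_natCast]

lemma tendsto_qFacOrd_natCast (hq0 : q ≠ 0) (hq : |q| < 1) (r : ℕ) :
    Tendsto (fun n : ℕ => qFacOrd q n r) atTop (𝓝 ((1 - q)⁻¹ ^ r)) := by
  simpa only [qFacOrd, prod_const, card_range] using
    tendsto_finsetProd (range r) fun i _ => tendsto_qNum_natCast_sub hq0 hq i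

lemma tendsto_qMultinomial_natCast (hq0 : q ≠ 0) (hq : |q| < 1) {k : ℕ} (x : Fin k → ℕ) :
    Tendsto (fun n : ℕ => qMultinomial q n x) atTop
      (𝓝 (∏ j, ((1 - q) ^ x j * qFactorial q (x j))⁻¹)) := by
  rw [prod_inv_distrib, prod_mul_distrib, prod_pow_eq_pow_sum, mul_inv, ← inv_pow,
    ← div_eq_mul_inv]
  exact (tendsto_qFacOrd_natCast hq0 hq _).div_const _

lemma multipliable_one_sub_mul_pow (θ : ℝ) (hq : |q| < 1) :
    Multipliable fun i : ℕ => 1 - θ * q ^ i := by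
  simpa only [← sub_eq_add_neg, neg_mul] using
    Real.multipliable_one_add_of_summable
      ((summable_geometric_of_abs_lt_one hq).mul_left (-θ))

end Limits

theorem qMultinomial_second_kind_tendsto_euler_general (q : ℝ) (hq0 : 0 < q) (hq1 : q < 1)
    (k : ℕ) (θ : Fin k → ℝ)
    (x : Fin k → ℕ) :
    Filter.Tendsto
      (fun n : ℕ =>
        qMultinomial q (n : ℤ) x *
          ∏ j : Fin k,
            θ j ^ x j *
              ∏ i ∈ Finset.range
                  (n - ∑ i' ∈ Finset.univ.filter (fun i' => i' ≤ j), x i'),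
                (1 - θ j * q ^ i))
      Filter.atTop
      (nhds (∏ j : Fin k,
        θ j ^ x j * (∏' i : ℕ, (1 - θ j * q ^ i)) /
          ((1 - q) ^ x j * qFactorial q (x j)))) := by
  have hq : |q| < 1 := by rwa [abs_of_pos hq0]
  have htrunc : ∀ (j : Fin k) (m : ℕ),
      Tendsto (fun n => ∏ i ∈ range (n - m), (1 - θ j * q ^ i)) atTop
        (𝓝 (∏' i : ℕ, (1 - θ j * q ^ i))) := fun j m =>
    (multipliable_one_sub_mul_pow (θ j) hq).hasProd.tendsto_prod_nat.comp
      (tendsto_sub_atTop_nat m)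
  convert (tendsto_qMultinomial_natCast hq0.ne' hq x).mul (tendsto_finsetProd univ fun j _ =>
    (htrunc j (∑ i' ∈ univ.filter (· ≤ j), x i')).const_mul (θ j ^ x j)) using 2
  rw [← prod_mul_distrib]
  exact prod_congr rfl fun j _ => by rw [div_eq_mul_inv, mul_comm]

/-- The pmf of the q-multinomial distribution of the second kind converges, as n → ∞,
    to that of the multiple q-Euler distribution. -/
theorem qMultinomial_second_kind_tendsto_euler (q : ℝ) (hq0 : 0 < q) (hq1 : q < 1)
    (k : ℕ) (hk : 1 ≤ k) (θ : Fin k → ℝ) (hθ0 : ∀ j, 0 < θ j) (hθ1 : ∀ j, θ j < 1)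
    (x : Fin k → ℕ) :
    Filter.Tendsto
      (fun n : ℕ =>
        qMultinomial q (n : ℤ) x *
          ∏ j : Fin k,
            θ j ^ x j *
              ∏ i ∈ Finset.range
                  (n - ∑ i' ∈ Finset.univ.filter (fun i' => i' ≤ j), x i'),
                (1 - θ j * q ^ i))
      Filter.atTop
      (nhds (∏ j : Fin k,
        θ j ^ x j * (∏' i : ℕ, (1 - θ j * q ^ i)) /
          ((1 - q) ^ x j * qFactorial q (x j)))) :=
  qMultinomial_second_kind_tendsto_euler_general q hq0 hq1 k θ x
end
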